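/- Let y > 0 be real and n ≥ 1 an integer. Then r̃(1, y, n) = (1/√(2π)) ∫_{-∞}^{∞} [ Σ_{l=0}^{n-1} ((n-1)√y · t)^{2l} / (2l)! ] · e^{-t²/2} dt; that is, r̃(1,y,n) equals the expected value of 2cosh_{2(n-1)}((n-1)√y · X) for X a standard normal random variable, where 2cosh_{2m}(u) = Σ_{k=0}^{m} u^{2k}/(2k)!. -/

import Mathlib

/-!
Expanding the truncated hyperbolic cosine, the integral is a sum of even Gaussian moments
`∫ t^(2l) e^(-t²/2) dt = √(2π) (2l-1)‼`, which come from `Γ(l + 1/2)`. Since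
`(2l)! = 2^l l! (2l-1)‼`, the `l`-th term becomes `((n-1)² y / 2)^l / l!`, which is the term
`k = n - l` of `r̃(1, y, n)`.
-/

open Real MeasureTheory Finset
open scoped Nat

noncomputable def rtilde (x y : ℝ) (n : ℕ) : ℝ :=
  if n = 0 then 1 else
    ∑ k ∈ Finset.Icc 1 n,
      ((n : ℝ) - 1) ^ (2 * (n - k)) / (2 ^ (n - k) * (Nat.factorial (n - k) : ℝ))
        * x ^ k * y ^ (n - k)

theorem Nat.factorial_two_mul_eq_mul_doubleFactorial (l : ℕ) : (2 * l)! = 2 ^ l * l ! * (2 * l - 1)‼ := by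
  cases l with
  | zero => rfl
  | succ l =>
    rw [show 2 * (l + 1) = 2 * l + 1 + 1 by ring, Nat.factorial_eq_mul_doubleFactorial,
      show 2 * l + 1 + 1 = 2 * (l + 1) by ring, Nat.doubleFactorial_two_mul,
      show 2 * (l + 1) - 1 = 2 * l + 1 by omega]

theorem integrable_pow_mul_exp_neg_mul_sq {b : ℝ} (hb : 0 < b) (k : ℕ) :
    Integrable fun x : ℝ => x ^ k * exp (-b * x ^ 2) := by
  simpa only [rpow_natCast] using
    integrable_rpow_mul_exp_neg_mul_sq hb (s := k) (by linarith [k.cast_nonneg (α := ℝ)])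

theorem integral_pow_two_mul_mul_exp_neg_mul_sq {b : ℝ} (hb : 0 < b) (l : ℕ) :
    ∫ x : ℝ, x ^ (2 * l) * exp (-b * x ^ 2) = (2 * l - 1 : ℕ)‼ * √(π / b) / (2 * b) ^ l := by
  set q : ℝ := ((2 * l : ℕ) : ℝ)
  have hq : -1 < q := by have : 0 ≤ q := Nat.cast_nonneg _; linarith
  have h_even : ∫ x : ℝ, x ^ (2 * l) * exp (-b * x ^ 2) =
      ∫ x : ℝ, (fun x : ℝ => x ^ q * exp (-b * x ^ (2 : ℝ))) |x| := by
    congr 1 with x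
    simp only [q, rpow_natCast, rpow_two, (even_two_mul l).pow_abs, sq_abs]
  rw [h_even, integral_comp_abs (f := fun x : ℝ => x ^ q * exp (-b * x ^ (2 : ℝ))),
    integral_rpow_mul_exp_neg_mul_rpow two_pos hq hb,
    show (q + 1) / 2 = l + 1 / 2 by push_cast [q]; ring, Real.Gamma_nat_add_half,
    show -(q + 1) / 2 = -(l + 1 / 2) by push_cast [q]; ring,
    rpow_neg hb.le, rpow_add hb, rpow_natCast, sqrt_div' _ hb.le, ← sqrt_eq_rpow, mul_pow]
  field_simp

theorem integral_sum_pow_two_mul_div_factorial_mul_exp_neg_sq_div_two (a : ℝ) (n : ℕ) :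
    ∫ t : ℝ, (∑ l ∈ range n, (a * t) ^ (2 * l) / (2 * l)!) * exp (-t ^ 2 / 2) =
      √(2 * π) * ∑ l ∈ range n, (a ^ 2 / 2) ^ l / l ! := by
  have hb : (0 : ℝ) < 1 / 2 := by norm_num
  calc ∫ t : ℝ, (∑ l ∈ range n, (a * t) ^ (2 * l) / (2 * l)!) * exp (-t ^ 2 / 2)
      = ∫ t : ℝ, ∑ l ∈ range n,
          a ^ (2 * l) / (2 * l)! * (t ^ (2 * l) * exp (-(1 / 2) * t ^ 2)) := by
        congr 1 with t
        rw [sum_mul]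
        congr 1 with l
        ring_nf
    _ = ∑ l ∈ range n, a ^ (2 * l) / (2 * l)! * ∫ t : ℝ, t ^ (2 * l) * exp (-(1 / 2) * t ^ 2) := by
        rw [integral_finsetSum _ fun l _ => (integrable_pow_mul_exp_neg_mul_sq hb _).const_mul _]
        simp only [integral_const_mul]
    _ = √(2 * π) * ∑ l ∈ range n, (a ^ 2 / 2) ^ l / l ! := by
        rw [mul_sum]
        congr 1 with l
        rw [integral_pow_two_mul_mul_exp_neg_mul_sq hb, Nat.factorial_two_mul_eq_mul_doubleFactorial,
          div_pow, ← pow_mul]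
        push_cast
        field_simp
        ring

theorem rtilde_one_eq_sum_range {n : ℕ} (hn : n ≠ 0) (y : ℝ) :
    rtilde 1 y n = ∑ l ∈ range n, (((n : ℝ) - 1) ^ 2 * y / 2) ^ l / l ! := by
  rw [rtilde, if_neg hn]
  refine sum_nbij' (fun k => n - k) (fun l => n - l) ?_ ?_ ?_ ?_ fun k _ => ?_
  all_goals try intro m hm; simp only [mem_Icc, mem_range] at hm ⊢; omega
  rw [one_pow, mul_one, div_pow, mul_pow, pow_mul, div_mul_eq_mul_div, div_div]

theorem rtilde_eq_gaussian_integral (y : ℝ) (hy : 0 < y) (n : ℕ) (hn : 1 ≤ n) :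
    rtilde 1 y n =
      (1 / Real.sqrt (2 * Real.pi)) *
        ∫ t : ℝ,
          (∑ l ∈ Finset.range n,
            (((n : ℝ) - 1) * Real.sqrt y * t) ^ (2 * l) / (Nat.factorial (2 * l) : ℝ))
            * Real.exp (-t ^ 2 / 2) := by
  rw [integral_sum_pow_two_mul_div_factorial_mul_exp_neg_sq_div_two, one_div,
    inv_mul_cancel_left₀ (by positivity), mul_pow, sq_sqrt hy.le,
    rtilde_one_eq_sum_range (by omega)]
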